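/- Let T be a subsemigroup of finite Rees index in a finitely generated transcendental entire semigroup S. Then I(S) = I(T), J(S) = J(T), and F(S) = F(T). -/

import Mathlib

open Filter Topology

/-- A family `S` of maps is normal on `V` if every sequence from `S` has a subsequence
converging locally uniformly on `V` or diverging uniformly to `∞` on compact subsets of `V`. -/
def NormalOn (S : Set (ℂ → ℂ)) (V : Set ℂ) : Prop :=
  ∀ seq : ℕ → ℂ → ℂ, (∀ n, seq n ∈ S) →
    ∃ φ : ℕ → ℕ, StrictMono φ ∧
      ((∃ g : ℂ → ℂ, TendstoLocallyUniformlyOn (fun n => seq (φ n)) g atTop V) ∨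
       (∀ K : Set ℂ, K ⊆ V → IsCompact K → ∀ M : ℝ,
          ∀ᶠ n in atTop, ∀ z ∈ K, M ≤ ‖seq (φ n) z‖))

/-- Fatou set of a semigroup of holomorphic maps: points of local normality. -/
def FatouSet (S : Set (ℂ → ℂ)) : Set ℂ :=
  {z | ∃ V ∈ 𝓝 z, NormalOn S V}

/-- Julia set: complement of the Fatou set. -/
def JuliaSet (S : Set (ℂ → ℂ)) : Set ℂ := (FatouSet S)ᶜ

/-- Escaping set of a semigroup: points where every element is iteratively divergent. -/
def EscapingSet (S : Set (ℂ → ℂ)) : Set ℂ :=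
  {z | ∀ f ∈ S, Tendsto (fun n => ‖f^[n] z‖) atTop atTop}

/-- Escaping set of a single function. -/
def EscapingSetOf (f : ℂ → ℂ) : Set ℂ :=
  {z | Tendsto (fun n => ‖f^[n] z‖) atTop atTop}

/-- A holomorphic semigroup: a nonempty set of entire maps closed under composition. -/
def HolomorphicSemigroup (S : Set (ℂ → ℂ)) : Prop :=
  S.Nonempty ∧ (∀ f ∈ S, Differentiable ℂ f) ∧ ∀ f ∈ S, ∀ g ∈ S, f ∘ g ∈ S

/-- A transcendental entire function: entire and not a polynomial. -/
def TranscendentalEntire (f : ℂ → ℂ) : Prop :=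
  Differentiable ℂ f ∧ ¬ ∃ p : Polynomial ℂ, ∀ z, f z = p.eval z

/-- A transcendental (entire) semigroup. -/
def TranscendentalSemigroup (S : Set (ℂ → ℂ)) : Prop :=
  S.Nonempty ∧ (∀ f ∈ S, TranscendentalEntire f) ∧ ∀ f ∈ S, ∀ g ∈ S, f ∘ g ∈ S

/-- `T` is a subsemigroup of `S`. -/
def IsSubsemigroupOf (T S : Set (ℂ → ℂ)) : Prop :=
  T.Nonempty ∧ T ⊆ S ∧ ∀ f ∈ T, ∀ g ∈ T, f ∘ g ∈ T

/-- `T` has finite index in `S`: `S` is a finite union of translates `fᵢ ∘ T` with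
`fᵢ ∈ S ∪ {id}`. -/
def FiniteIndexIn (T S : Set (ℂ → ℂ)) : Prop :=
  ∃ (n : ℕ) (fs : Fin n → ℂ → ℂ), (∀ i, fs i ∈ S ∨ fs i = id) ∧
    S = ⋃ i, (fun h => fs i ∘ h) '' T

/-- `T` has cofinite index in `S`. -/
def CofiniteIndexIn (T S : Set (ℂ → ℂ)) : Prop :=
  ∃ (n : ℕ) (fs : Fin n → ℂ → ℂ), (∀ i, fs i ∈ S ∨ fs i = id) ∧
    ∀ f ∈ S, ∃ i, fs i ∘ f ∈ T

/-- Membership in the semigroup generated by a set `A` of maps: all finite compositions. -/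
inductive SemigroupGen (A : Set (ℂ → ℂ)) : (ℂ → ℂ) → Prop
  | base : ∀ f ∈ A, SemigroupGen A f
  | comp : ∀ f g, SemigroupGen A f → SemigroupGen A g → SemigroupGen A (f ∘ g)

/-- A finitely generated semigroup of maps. -/
def FinitelyGeneratedSemigroup (S : Set (ℂ → ℂ)) : Prop :=
  ∃ A : Set (ℂ → ℂ), A.Finite ∧ S = {f | SemigroupGen A f}

/-- `U` is a component of the Fatou set of `S`. -/
def IsFatouComponent (S : Set (ℂ → ℂ)) (U : Set ℂ) : Prop :=
  ∃ z ∈ FatouSet S, U = connectedComponentIn (FatouSet S) z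

/-- `S` is discontinuous at `z`: some neighborhood `V` of `z` satisfies `f(V) ∩ V = ∅`
for all `f ∈ S`. -/
def DiscontinuousAt (S : Set (ℂ → ℂ)) (z : ℂ) : Prop :=
  ∃ V ∈ 𝓝 z, ∀ f ∈ S, f '' V ∩ V = ∅

/-- The regular set of `S`. -/
def RegularSet (S : Set (ℂ → ℂ)) : Set ℂ := {z | DiscontinuousAt S z}

/-- The limit set of `S`. -/
def LimitSet (S : Set (ℂ → ℂ)) : Set ℂ :=
  {z | ∃ (z₀ : ℂ) (fs : ℕ → ℂ → ℂ), (∀ n, fs n ∈ S) ∧ Function.Injective fs ∧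
    Tendsto (fun n => fs n z₀) atTop (𝓝 z)}

/-- A partial fundamental set for `S`. -/
def PartialFundamentalSet (S : Set (ℂ → ℂ)) (U : Set ℂ) : Prop :=
  U.Nonempty ∧ U ⊆ RegularSet S ∧ ∀ f ∈ S, f '' U ∩ U = ∅

/-- A fundamental set for `S`. -/
def FundamentalSet (S : Set (ℂ → ℂ)) (U : Set ℂ) : Prop :=
  PartialFundamentalSet S U ∧ (⋃ f ∈ S, f '' U) = RegularSet S

/-! A sequence in `S` either takes one of the finitely many values in `S \ T` infinitely often,
giving a constant (hence convergent) subsequence, or eventually lies in `T`; so normality of `T`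
and of `S` agree, and `F(S) = F(T)`.

For `f ∈ S` the iterates `f^[k + 1]` are pairwise distinct: `f^[a + 1] = f^[b + 1]` with `a < b`
makes `f^[b - a]` the identity on the open range of `f^[a + 1]`, hence everywhere, and the identity
is a polynomial. So some iterate `f^[k]` lies in `T`. Escape under `f^[k]` forces escape under `f`:
if `f^[n] z` returns to a compact set `K`, then the next iterate of `f^[k]` along the orbit lies in
the compact set `⋃_{j ≤ k} f^[j] '' K`. -/

section Iteration

open Function

variable {X : Type*} [TopologicalSpace X]

theorem tendsto_iterate_cocompact_of_iterate_iterate {f : X → X} (hf : Continuous f) {k : ℕ}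
    (hk : 0 < k) {x : X} (h : Tendsto (fun m => (f^[k])^[m] x) atTop (cocompact X)) :
    Tendsto (fun n => f^[n] x) atTop (cocompact X) := by
  rw [hasBasis_cocompact.tendsto_right_iff] at h ⊢
  intro K hK
  have hK' : IsCompact (⋃ j ∈ Finset.range (k + 1), f^[j] '' K) :=
    Finset.isCompact_biUnion _ fun j _ => hK.image (hf.iterate j)
  obtain ⟨N, hN⟩ := eventually_atTop.1 (h _ hK')
  refine eventually_atTop.2 ⟨k * N, fun n hn hnK => ?_⟩
  have hnext : k - n % k + n = k * (n / k + 1) := by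
    have := Nat.div_add_mod n k
    have := Nat.mod_lt n hk
    rw [Nat.mul_succ]
    omega
  have hN_le : N ≤ n / k + 1 :=
    Nat.le_succ_of_le ((Nat.le_div_iff_mul_le hk).2 (by rwa [Nat.mul_comm]))
  refine hN (n / k + 1) hN_le ?_
  rw [← iterate_mul, ← hnext, iterate_add_apply]
  exact Set.mem_biUnion (Finset.mem_range.2 (by omega)) (Set.mem_image_of_mem _ hnK)

end Iteration

theorem NormalOn.mono {S T : Set (ℂ → ℂ)} {V : Set ℂ} (h : NormalOn S V) (hTS : T ⊆ S) :
    NormalOn T V :=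
  fun seq hseq => h seq fun n => hTS (hseq n)

theorem NormalOn.union_of_finite {T F : Set (ℂ → ℂ)} {V : Set ℂ} (h : NormalOn T V)
    (hF : F.Finite) : NormalOn (T ∪ F) V := by
  intro seq hseq
  by_cases hfreq : ∃ᶠ n in atTop, ∃ f ∈ F, seq n = f
  · obtain ⟨f, -, hf⟩ := hF.frequently_exists.1 hfreq
    obtain ⟨φ, hφ, hφf⟩ := extraction_of_frequently_atTop hf
    refine ⟨φ, hφ, Or.inl ⟨f, ?_⟩⟩
    simp only [hφf]
    exact (tendstoUniformlyOn_iff_tendsto.2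
      (tendsto_diag_uniformity (fun q : ℕ × ℂ => f q.2) _)).tendstoLocallyUniformlyOn
  · obtain ⟨N, hN⟩ := eventually_atTop.1 (not_frequently.1 hfreq)
    have hT : ∀ n, seq (n + N) ∈ T := fun n =>
      (hseq (n + N)).resolve_right fun hF => hN (n + N) (Nat.le_add_left N n) ⟨_, hF, rfl⟩
    obtain ⟨ψ, hψ, hconv⟩ := h _ hT
    exact ⟨fun n => ψ n + N, fun a b hab => Nat.add_lt_add_right (hψ hab) N, hconv⟩

theorem fatouSet_eq_of_finite_diff {S T : Set (ℂ → ℂ)} (hTS : T ⊆ S) (hST : (S \ T).Finite) :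
    FatouSet S = FatouSet T := by
  ext z
  constructor
  · rintro ⟨V, hV, hS⟩
    exact ⟨V, hV, hS.mono hTS⟩
  · rintro ⟨V, hV, hT⟩
    exact ⟨V, hV, Set.union_sdiff_cancel hTS ▸ hT.union_of_finite hST⟩

theorem TranscendentalEntire.ne_id {f : ℂ → ℂ} (hf : TranscendentalEntire f) : f ≠ id :=
  fun h => hf.2 ⟨Polynomial.X, fun z => by simp [h]⟩

theorem TranscendentalEntire.isOpen_range {f : ℂ → ℂ} (hf : TranscendentalEntire f) :
    IsOpen (Set.range f) := by
  rcases (Complex.analyticOnNhd_univ_iff_differentiable.2 hf.1).is_constant_or_isOpen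
    isPreconnected_univ with ⟨c, hc⟩ | hopen
  · exact absurd ⟨Polynomial.C c, fun z => by simp [hc z trivial]⟩ hf.2
  · simpa using hopen Set.univ subset_rfl isOpen_univ

theorem eq_id_of_comp_eq_of_isOpen_range {h g : ℂ → ℂ} (hh : Differentiable ℂ h)
    (hg : IsOpen (Set.range g)) (hcomp : h ∘ g = g) : h = id := by
  refine (Complex.analyticOnNhd_univ_iff_differentiable.2 hh).eq_of_eventuallyEq
    (Complex.analyticOnNhd_univ_iff_differentiable.2 differentiable_id)
    (Filter.eventually_of_mem (hg.mem_nhds ⟨0, rfl⟩) ?_)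
  rintro _ ⟨z, rfl⟩
  exact congrFun hcomp z

namespace TranscendentalSemigroup

variable {S T : Set (ℂ → ℂ)} {f : ℂ → ℂ}

theorem iterate_succ_mem (hS : TranscendentalSemigroup S) (hf : f ∈ S) (k : ℕ) :
    f^[k + 1] ∈ S := by
  induction k with
  | zero => simpa using hf
  | succ k ih => simpa only [Function.iterate_succ'] using hS.2.2 f hf _ ih

theorem iterate_succ_injective (hS : TranscendentalSemigroup S) (hf : f ∈ S) :
    Function.Injective fun k => f^[k + 1] := by
  refine Function.Injective.of_lt_imp_ne fun a b hab heq => ?_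
  have hcomp : f^[b - a] ∘ f^[a + 1] = f^[a + 1] := by
    rw [← Function.iterate_add, show b - a + (a + 1) = b + 1 by omega]
    exact heq.symm
  have hmem : f^[b - a] ∈ S := by
    simpa only [show b - a - 1 + 1 = b - a by omega] using hS.iterate_succ_mem hf (b - a - 1)
  exact (hS.2.1 _ hmem).ne_id <| eq_id_of_comp_eq_of_isOpen_range (hS.2.1 _ hmem).1
    (hS.2.1 _ (hS.iterate_succ_mem hf a)).isOpen_range hcomp

theorem exists_iterate_mem (hS : TranscendentalSemigroup S) (hST : (S \ T).Finite)
    (hf : f ∈ S) : ∃ k, 0 < k ∧ f^[k] ∈ T := by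
  by_contra! hnot
  refine Set.infinite_range_of_injective (hS.iterate_succ_injective hf) (hST.subset ?_)
  rintro _ ⟨k, rfl⟩
  exact ⟨hS.iterate_succ_mem hf k, hnot (k + 1) k.succ_pos⟩

theorem escapingSet_eq_of_finite_diff (hS : TranscendentalSemigroup S) (hTS : T ⊆ S)
    (hST : (S \ T).Finite) : EscapingSet S = EscapingSet T := by
  refine subset_antisymm (fun z hz f hf => hz f (hTS hf)) fun z hz f hf => ?_
  obtain ⟨k, hk, hkT⟩ := hS.exists_iterate_mem hST hf
  have hescape := hz _ hkT
  rw [tendsto_norm_atTop_iff_cobounded, Metric.cobounded_eq_cocompact] at hescape ⊢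
  exact tendsto_iterate_cocompact_of_iterate_iterate (hS.2.1 f hf).1.continuous hk hescape

end TranscendentalSemigroup

theorem stmt_15_general (S T : Set (ℂ → ℂ)) (hS : TranscendentalSemigroup S)
    (hT : IsSubsemigroupOf T S)
    (hRees : (S \ T).Finite) :
    EscapingSet S = EscapingSet T ∧ JuliaSet S = JuliaSet T ∧
      FatouSet S = FatouSet T := by
  have hFatou := fatouSet_eq_of_finite_diff hT.2.1 hRees
  exact ⟨hS.escapingSet_eq_of_finite_diff hT.2.1 hRees, by rw [JuliaSet, JuliaSet, hFatou], hFatou⟩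

theorem stmt_15 (S T : Set (ℂ → ℂ)) (hS : TranscendentalSemigroup S)
    (hfg : FinitelyGeneratedSemigroup S) (hT : IsSubsemigroupOf T S)
    (hRees : (S \ T).Finite) :
    EscapingSet S = EscapingSet T ∧ JuliaSet S = JuliaSet T ∧
      FatouSet S = FatouSet T :=
  stmt_15_general S T hS hT hRees
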